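/- For every ε ∈ (0, 1/2), every real z ≥ 1, every integer k ≥ 1, and every γ ≥ 1, there exists ε'₀ > 0 depending only on ε, z, and γ such that the following holds for all 0 < ε' ≤ ε'₀ and every integer d ≥ 1. Let X ⊆ ℝ^d be finite, and let C' ⊆ ℝ^d be nonempty with |C'| ≤ k satisfying Cost(X, C') ≤ γ · Cost(X, C) for every nonempty finite C ⊆ ℝ^d with |C| ≤ k. Suppose that for each x ∈ X a point x' ∈ ℝ^d is given with ‖x − x'‖₂ ≤ ε' · dist(x, C'). Then for every nonempty finite C ⊆ ℝ^d with |C| ≤ k: (1 − ε) · Cost(X, C) ≤ Σ_{x∈X} dist(x', C)^z ≤ (1 + ε) · Cost(X, C). -/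

import Mathlib

open scoped BigOperators

/-- `dSet x C` is the distance from the point `x` to the finite set `C`. -/
noncomputable def dSet {d : ℕ} (x : EuclideanSpace ℝ (Fin d))
    (C : Finset (EuclideanSpace ℝ (Fin d))) : ℝ :=
  sInf ((fun c => dist x c) '' (C : Set (EuclideanSpace ℝ (Fin d))))

/-- `kzCost z X C = Σ_{x ∈ X} dist(x,C)^z`. -/
noncomputable def kzCost {d : ℕ} (z : ℝ) (X C : Finset (EuclideanSpace ℝ (Fin d))) : ℝ :=
  ∑ x ∈ X, dSet x C ^ z

/-! Write `x' = f x`. By the triangle inequality `dist(x', C)` and `dist(x, C)` differ by at most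
`‖x - x'‖ ≤ ε' · dist(x, C')`. Since `(a + b)^z ≤ (1 + τ)^z a^z + ((1 + τ)/τ)^z b^z` for every
`τ > 0`, each of `Cost(X, C)` and `Σ dist(x', C)^z` is at most `(1 + τ)^z` times the other plus
`((1 + τ)/τ)^z ε'^z Cost(X, C')`. As `Cost(X, C') ≤ γ Cost(X, C)`, choosing first `τ` and then
`ε'` small enough makes both `(1 + τ)^z ≤ 1 + ε/2` and the error term at most `ε/2 · Cost(X, C)`.
-/

section dSet

variable {d : ℕ}

lemma dSet_eq_infDist (x : EuclideanSpace ℝ (Fin d)) (C : Finset (EuclideanSpace ℝ (Fin d))) :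
    dSet x C = Metric.infDist x (C : Set (EuclideanSpace ℝ (Fin d))) := by
  rw [dSet, Metric.infDist_eq_iInf, iInf, Set.image_eq_range]

lemma dSet_nonneg (x : EuclideanSpace ℝ (Fin d)) (C : Finset (EuclideanSpace ℝ (Fin d))) :
    0 ≤ dSet x C := by
  rw [dSet_eq_infDist]
  exact Metric.infDist_nonneg

lemma dSet_le_dSet_add_dist (x y : EuclideanSpace ℝ (Fin d))
    (C : Finset (EuclideanSpace ℝ (Fin d))) : dSet x C ≤ dSet y C + dist x y := by
  simp only [dSet_eq_infDist]
  exact Metric.infDist_le_infDist_add_dist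

lemma kzCost_nonneg (z : ℝ) (X C : Finset (EuclideanSpace ℝ (Fin d))) : 0 ≤ kzCost z X C :=
  Finset.sum_nonneg fun x _ => Real.rpow_nonneg (dSet_nonneg x C) z

lemma sum_dist_rpow_le_mul_kzCost {z ε' : ℝ} (hz : 0 ≤ z) (hε' : 0 ≤ ε')
    {X C' : Finset (EuclideanSpace ℝ (Fin d))}
    {f : EuclideanSpace ℝ (Fin d) → EuclideanSpace ℝ (Fin d)}
    (hf : ∀ x ∈ X, dist x (f x) ≤ ε' * dSet x C') :
    ∑ x ∈ X, dist x (f x) ^ z ≤ ε' ^ z * kzCost z X C' := by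
  rw [kzCost, Finset.mul_sum]
  refine Finset.sum_le_sum fun x hx => ?_
  rw [← Real.mul_rpow hε' (dSet_nonneg x C')]
  exact Real.rpow_le_rpow dist_nonneg (hf x hx) hz

end dSet

/-- Either `b ≤ τ a`, and then `a + b ≤ (1 + τ) a`, or `a < b / τ`, and then
`a + b ≤ (1 + τ) / τ · b`. -/
lemma add_rpow_le_one_add_rpow_mul_add {z τ a b : ℝ} (hz : 0 ≤ z) (hτ : 0 < τ) (ha : 0 ≤ a)
    (hb : 0 ≤ b) : (a + b) ^ z ≤ (1 + τ) ^ z * a ^ z + ((1 + τ) / τ) ^ z * b ^ z := by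
  rcases le_or_gt b (τ * a) with hba | hab
  · have h : (a + b) ^ z ≤ ((1 + τ) * a) ^ z :=
      Real.rpow_le_rpow (by positivity) (by linarith) hz
    rw [Real.mul_rpow (by positivity) ha] at h
    have : 0 ≤ ((1 + τ) / τ) ^ z * b ^ z := by positivity
    linarith
  · have hle : a + b ≤ (1 + τ) / τ * b := by
      rw [div_mul_eq_mul_div, le_div_iff₀ hτ]
      nlinarith
    have h : (a + b) ^ z ≤ ((1 + τ) / τ * b) ^ z := Real.rpow_le_rpow (by positivity) hle hz
    rw [Real.mul_rpow (by positivity) hb] at h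
    have : 0 ≤ (1 + τ) ^ z * a ^ z := by positivity
    linarith

lemma sum_rpow_le_of_le_add {ι : Type*} {s : Finset ι} {u v r : ι → ℝ} {z τ : ℝ} (hz : 0 ≤ z)
    (hτ : 0 < τ) (hu : ∀ i, 0 ≤ u i) (hv : ∀ i, 0 ≤ v i) (hr : ∀ i, 0 ≤ r i)
    (h : ∀ i ∈ s, u i ≤ v i + r i) :
    ∑ i ∈ s, u i ^ z ≤
      (1 + τ) ^ z * ∑ i ∈ s, v i ^ z + ((1 + τ) / τ) ^ z * ∑ i ∈ s, r i ^ z := by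
  rw [Finset.mul_sum, Finset.mul_sum, ← Finset.sum_add_distrib]
  exact Finset.sum_le_sum fun i hi => (Real.rpow_le_rpow (hu i) (h i hi) hz).trans
    (add_rpow_le_one_add_rpow_mul_add hz hτ (hv i) (hr i))

lemma exists_pos_one_add_rpow_le {z η : ℝ} (hz : 0 < z) (hη : 0 < η) :
    ∃ τ > 0, (1 + τ) ^ z ≤ 1 + η := by
  refine ⟨(1 + η) ^ z⁻¹ - 1, sub_pos.2 (Real.one_lt_rpow (by linarith) (inv_pos.2 hz)), ?_⟩
  rw [add_sub_cancel, ← Real.le_rpow_inv_iff_of_pos (by positivity) (by linarith) hz]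

lemma one_sub_mul_le_and_le_one_add_mul {A S ℓ e ε : ℝ} (hA : 0 ≤ A) (hS : 0 ≤ S) (hε : 0 < ε)
    (hℓ : 0 < ℓ) (hℓε : ℓ ≤ 1 + ε / 2) (he : e ≤ ε / 2 * A) (hSA : S ≤ ℓ * A + e)
    (hAS : A ≤ ℓ * S + e) :
    (1 - ε) * A ≤ S ∧ S ≤ (1 + ε) * A :=
  ⟨by nlinarith, by nlinarith⟩

theorem rounded_offsets_strong_coreset_general
    (ε : ℝ) (hε0 : 0 < ε) (z : ℝ) (hz : 1 ≤ z)
    (γ : ℝ) (hγ : 1 ≤ γ) :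
    ∃ ε'₀ : ℝ, 0 < ε'₀ ∧
      ∀ (k : ℕ), 1 ≤ k → ∀ ε' : ℝ, 0 < ε' → ε' ≤ ε'₀ → ∀ (d : ℕ), 1 ≤ d →
        ∀ (X C' : Finset (EuclideanSpace ℝ (Fin d))), C'.Nonempty → C'.card ≤ k →
          (∀ C : Finset (EuclideanSpace ℝ (Fin d)), C.Nonempty → C.card ≤ k →
            kzCost z X C' ≤ γ * kzCost z X C) →
          ∀ f : EuclideanSpace ℝ (Fin d) → EuclideanSpace ℝ (Fin d),
            (∀ x ∈ X, dist x (f x) ≤ ε' * dSet x C') →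
            ∀ C : Finset (EuclideanSpace ℝ (Fin d)), C.Nonempty → C.card ≤ k →
              (1 - ε) * kzCost z X C ≤ ∑ x ∈ X, dSet (f x) C ^ z ∧
                ∑ x ∈ X, dSet (f x) C ^ z ≤ (1 + ε) * kzCost z X C := by
  have hz0 : 0 < z := by linarith
  obtain ⟨τ, hτ, hτε⟩ := exists_pos_one_add_rpow_le hz0 (half_pos hε0)
  set c := ((1 + τ) / τ) ^ z
  refine ⟨(ε / 2 / (c * γ)) ^ z⁻¹, by positivity, ?_⟩
  intro k _ ε' hε' hε'₀ d _ X C' _ _ hC' f hf C hC hCk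
  have hcε' : c * ε' ^ z * γ ≤ ε / 2 := by
    rw [Real.le_rpow_inv_iff_of_pos hε'.le (by positivity) hz0,
      le_div_iff₀ (by positivity)] at hε'₀
    linarith
  have herr : c * ∑ x ∈ X, dist x (f x) ^ z ≤ ε / 2 * kzCost z X C :=
    calc c * ∑ x ∈ X, dist x (f x) ^ z ≤ c * (ε' ^ z * (γ * kzCost z X C)) := by
          gcongr
          exact (sum_dist_rpow_le_mul_kzCost hz0.le hε'.le hf).trans
            (by gcongr; exact hC' C hC hCk)
      _ = c * ε' ^ z * γ * kzCost z X C := by ring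
      _ ≤ ε / 2 * kzCost z X C := by gcongr; exact kzCost_nonneg z X C
  refine one_sub_mul_le_and_le_one_add_mul (kzCost_nonneg z X C)
    (Finset.sum_nonneg fun x _ => Real.rpow_nonneg (dSet_nonneg _ C) z) hε0 (by positivity)
    hτε herr ?_ ?_
  · refine sum_rpow_le_of_le_add hz0.le hτ (fun _ => dSet_nonneg _ C)
      (fun _ => dSet_nonneg _ C) (fun _ => dist_nonneg) fun x _ => ?_
    simpa only [dist_comm] using dSet_le_dSet_add_dist (f x) x C
  · exact sum_rpow_le_of_le_add hz0.le hτ (fun _ => dSet_nonneg _ C)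
      (fun _ => dSet_nonneg _ C) (fun _ => dist_nonneg) fun x _ => dSet_le_dSet_add_dist x (f x) C

/-- Rounding each point `x` of `X` to a point `x' = f x` with
`‖x − x'‖₂ ≤ ε'·dist(x,C')`, where `C'` is a `γ`-approximate set of at most `k` centers,
preserves the `(k,z)`-clustering cost of every candidate set of at most `k` centers up to a
`(1 ± ε)` factor, provided `ε'` is small enough depending only on `ε`, `z`, `γ`. -/
theorem rounded_offsets_strong_coreset
    (ε : ℝ) (hε0 : 0 < ε) (hε : ε < 1 / 2) (z : ℝ) (hz : 1 ≤ z)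
    (γ : ℝ) (hγ : 1 ≤ γ) :
    ∃ ε'₀ : ℝ, 0 < ε'₀ ∧
      ∀ (k : ℕ), 1 ≤ k → ∀ ε' : ℝ, 0 < ε' → ε' ≤ ε'₀ → ∀ (d : ℕ), 1 ≤ d →
        ∀ (X C' : Finset (EuclideanSpace ℝ (Fin d))), C'.Nonempty → C'.card ≤ k →
          (∀ C : Finset (EuclideanSpace ℝ (Fin d)), C.Nonempty → C.card ≤ k →
            kzCost z X C' ≤ γ * kzCost z X C) →
          ∀ f : EuclideanSpace ℝ (Fin d) → EuclideanSpace ℝ (Fin d),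
            (∀ x ∈ X, dist x (f x) ≤ ε' * dSet x C') →
            ∀ C : Finset (EuclideanSpace ℝ (Fin d)), C.Nonempty → C.card ≤ k →
              (1 - ε) * kzCost z X C ≤ ∑ x ∈ X, dSet (f x) C ^ z ∧
                ∑ x ∈ X, dSet (f x) C ^ z ≤ (1 + ε) * kzCost z X C :=
  rounded_offsets_strong_coreset_general ε hε0 z hz γ hγ
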